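/- arXiv:2204.03875 — 2 statements merged into one kernel-verified Lean document; each statement's English description precedes it below -/
import Mathlib

section
/- Let 0 < ε ≤ 1, let ε̄ = ε/c1 with c1 ≥ 8·c0, and let 0 < ε̲ ≤ ε̄. Let M be a matching of size i < n between A and B such that cost(M) ≤ (1 + ε/2)·cost(M_opt) and every alternating cycle Γ with respect to M satisfies adj_{ε̄,M}(Γ) ≥ 0. Then every augmenting path Π with respect to M with adj_{ε̲,M}(Π) ≤ adj*_{ε̄,M} satisfies netcost_M(Π) ≤ (1 + ε/2)·cost(M_opt) − cost(M); in particular cost(M ⊕ Π) ≤ (1 + ε/2)·cost(M_opt). -/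
/-!
The symmetric difference `M ∆ Mopt` splits into edge-disjoint augmenting paths and alternating
cycles with respect to `M`. Their `ε̄`-adjusted costs add up to
`cost(Mopt) − cost(M) + c0·ε̄·‖M ∆ Mopt‖`, which is at most `(1 + ε/2)·cost(Mopt) − cost(M)`
since `c0·ε̄ ≤ ε/8` and `cost(M) + cost(Mopt) ≤ (5/2)·cost(Mopt)`. The cycles contribute
nonnegatively and, as `|M| < n`, at least one path occurs, so `adj*_{ε̄,M}` is below that bound.
Finally `netcost_M(Π) ≤ adj_{ε̲,M}(Π) ≤ adj*_{ε̄,M}` and `cost(M ⊕ Π) = cost(M) + netcost_M(Π)`.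
-/

open scoped Classical

noncomputable section

/-- Points in `d`-dimensional Euclidean space. -/
abbrev Pt (d : ℕ) : Type := EuclideanSpace ℝ (Fin d)

/-- `M` is a matching between `A` and `B`: every edge is a pair in `A × B`, and no point
appears in more than one edge. -/
def IsMatching {d : ℕ} (A B : Finset (Pt d)) (M : Finset (Pt d × Pt d)) : Prop :=
  (∀ e ∈ M, e.1 ∈ A ∧ e.2 ∈ B) ∧
  (∀ e ∈ M, ∀ e' ∈ M, e.1 = e'.1 → e = e') ∧
  (∀ e ∈ M, ∀ e' ∈ M, e.2 = e'.2 → e = e')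

/-- The cost of a matching: the sum of Euclidean lengths of its edges. -/
def matchCost {d : ℕ} (M : Finset (Pt d × Pt d)) : ℝ :=
  ∑ e ∈ M, dist e.1 e.2

/-- A point is free with respect to `M` if it lies in no edge of `M`. -/
def IsFree {d : ℕ} (M : Finset (Pt d × Pt d)) (p : Pt d) : Prop :=
  ∀ e ∈ M, e.1 ≠ p ∧ e.2 ≠ p

/-- The edge of the complete bipartite graph joining `u` and `v`, oriented as a pair in
`A × B`. -/
def edgeOf {d : ℕ} (A : Finset (Pt d)) (u v : Pt d) : Pt d × Pt d :=
  if u ∈ A then (u, v) else (v, u)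

/-- The edges of a path given by its list of vertices. -/
def pathEdges {d : ℕ} (A : Finset (Pt d)) (L : List (Pt d)) : List (Pt d × Pt d) :=
  (L.zip L.tail).map fun uv => edgeOf A uv.1 uv.2

/-- The edges of a cycle given by its list of vertices (including the wrap-around edge). -/
def cycleEdges {d : ℕ} (A : Finset (Pt d)) (L : List (Pt d)) : List (Pt d × Pt d) :=
  pathEdges A (L ++ L.take 1)

/-- Two consecutive edges alternate: exactly one of them is a matching edge. -/
def AltRel {d : ℕ} (M : Finset (Pt d × Pt d)) (e f : Pt d × Pt d) : Prop :=
  e ∈ M ↔ f ∉ M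

/-- An alternating path with respect to `M`: a simple path in the complete bipartite graph
on `A` and `B` whose edges alternate between edges of `M` and edges not in `M`. -/
def IsAltPath {d : ℕ} (A B : Finset (Pt d)) (M : Finset (Pt d × Pt d))
    (L : List (Pt d)) : Prop :=
  2 ≤ L.length ∧ L.Nodup ∧ (∀ p ∈ L, p ∈ A ∪ B) ∧
  L.Chain' (fun u v => (u ∈ A ∧ v ∈ B) ∨ (u ∈ B ∧ v ∈ A)) ∧
  (pathEdges A L).Chain' (AltRel M)

/-- An augmenting path: an alternating path whose two endpoints are free. -/
def IsAugPath {d : ℕ} (A B : Finset (Pt d)) (M : Finset (Pt d × Pt d))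
    (L : List (Pt d)) : Prop :=
  IsAltPath A B M L ∧
  (∀ p, L.head? = some p → IsFree M p) ∧
  (∀ p, L.getLast? = some p → IsFree M p)

/-- An alternating cycle with respect to `M`: a simple cycle in the complete bipartite
graph on `A` and `B` whose edges alternate between edges of `M` and edges not in `M`
(including around the wrap-around edge). -/
def IsAltCycle {d : ℕ} (A B : Finset (Pt d)) (M : Finset (Pt d × Pt d))
    (L : List (Pt d)) : Prop :=
  4 ≤ L.length ∧ L.Nodup ∧ (∀ p ∈ L, p ∈ A ∪ B) ∧
  (L ++ L.take 1).Chain' (fun u v => (u ∈ A ∧ v ∈ B) ∨ (u ∈ B ∧ v ∈ A)) ∧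
  (cycleEdges A L).Chain' (AltRel M) ∧
  (∀ e f, (cycleEdges A L).head? = some e → (cycleEdges A L).getLast? = some f →
    AltRel M f e)

/-- The Euclidean length `‖Π‖` of a path or cycle given by its list of edges. -/
def eucLen {d : ℕ} (E : List (Pt d × Pt d)) : ℝ :=
  (E.map fun e => dist e.1 e.2).sum

/-- The net cost of an alternating path or cycle given by its list of edges:
non-matching edges count positively, matching edges negatively. -/
def netCost {d : ℕ} (M : Finset (Pt d × Pt d)) (E : List (Pt d × Pt d)) : ℝ :=
  (E.map fun e => if e ∈ M then -(dist e.1 e.2) else dist e.1 e.2).sum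

/-- The `θ`-adjusted cost `adj_{θ,M}(Π) = netcost_M(Π) + c0·θ·‖Π‖`. -/
def adjCost {d : ℕ} (c0 θ : ℝ) (M : Finset (Pt d × Pt d))
    (E : List (Pt d × Pt d)) : ℝ :=
  netCost M E + c0 * θ * eucLen E

/-- The set of `θ`-adjusted costs of augmenting paths with respect to `M`;
`adj*_{θ,M}` is its least element. -/
def adjSet {d : ℕ} (c0 θ : ℝ) (A B : Finset (Pt d)) (M : Finset (Pt d × Pt d)) : Set ℝ :=
  {x | ∃ L : List (Pt d), IsAugPath A B M L ∧ adjCost c0 θ M (pathEdges A L) = x}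

def Incident {d : ℕ} (v : Pt d) (e : Pt d × Pt d) : Prop := e.1 = v ∨ e.2 = v

def Touches {d : ℕ} (G : Finset (Pt d × Pt d)) (v : Pt d) : Prop := ∃ e ∈ G, Incident v e

def Crosses {d : ℕ} (A B : Finset (Pt d)) (u v : Pt d) : Prop :=
  (u ∈ A ∧ v ∈ B) ∨ (u ∈ B ∧ v ∈ A)

section Edges

variable {d : ℕ} {A B : Finset (Pt d)} {M : Finset (Pt d × Pt d)}

lemma isFree_iff_forall_not_incident {p : Pt d} : IsFree M p ↔ ∀ e ∈ M, ¬ Incident p e := by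
  simp only [IsFree, Incident, not_or]

lemma IsMatching.mem_union_of_incident (hM : IsMatching A B M) {e : Pt d × Pt d} (he : e ∈ M)
    {v : Pt d} (hv : Incident v e) : v ∈ A ∪ B := by
  rcases hv with rfl | rfl
  · exact Finset.mem_union_left _ (hM.1 e he).1
  · exact Finset.mem_union_right _ (hM.1 e he).2

lemma IsMatching.eq_of_incident (hAB : Disjoint A B) (hM : IsMatching A B M)
    {e e' : Pt d × Pt d} (he : e ∈ M) (he' : e' ∈ M) {v : Pt d}
    (hv : Incident v e) (hv' : Incident v e') : e = e' := by
  have hd := Finset.disjoint_left.mp hAB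
  rcases hv with rfl | h <;> rcases hv' with h' | h'
  · exact hM.2.1 e he e' he' h'.symm
  · exact (hd (hM.1 e he).1 (h' ▸ (hM.1 e' he').2)).elim
  · exact (hd (h' ▸ (hM.1 e' he').1) (h ▸ (hM.1 e he).2)).elim
  · exact hM.2.2 e he e' he' (h.trans h'.symm)

lemma exists_other_endpoint (hAB : Disjoint A B) {e : Pt d × Pt d} (he : e.1 ∈ A ∧ e.2 ∈ B)
    {u : Pt d} (hu : Incident u e) :
    ∃ w, Incident w e ∧ u ≠ w ∧ Crosses A B u w ∧ edgeOf A u w = e ∧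
      ∀ x, Incident x e → x = u ∨ x = w := by
  obtain ⟨a, b⟩ := e
  obtain ⟨ha, hb⟩ := he
  have hab : a ≠ b := fun h => Finset.disjoint_left.mp hAB ha (h ▸ hb)
  have hbA : b ∉ A := fun h => Finset.disjoint_left.mp hAB h hb
  rcases hu with rfl | rfl
  · refine ⟨b, Or.inr rfl, hab, Or.inl ⟨ha, hb⟩, if_pos ha, fun x hx => ?_⟩
    exact hx.imp Eq.symm Eq.symm
  · refine ⟨a, Or.inl rfl, hab.symm, Or.inr ⟨hb, ha⟩, if_neg hbA, fun x hx => ?_⟩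
    exact hx.symm.imp Eq.symm Eq.symm

end Edges

section PathEdges

variable {d : ℕ} (A : Finset (Pt d))

@[simp]
lemma pathEdges_nil : pathEdges A [] = [] := rfl

@[simp]
lemma pathEdges_singleton (x : Pt d) : pathEdges A [x] = [] := rfl

@[simp]
lemma pathEdges_cons_cons (u w : Pt d) (t : List (Pt d)) :
    pathEdges A (u :: w :: t) = edgeOf A u w :: pathEdges A (w :: t) := rfl

lemma length_pathEdges (L : List (Pt d)) : (pathEdges A L).length = L.length - 1 := by
  simp [pathEdges]

lemma pathEdges_append_singleton {w : Pt d} (z : Pt d) :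
    ∀ {L : List (Pt d)}, L.getLast? = some w →
      pathEdges A (L ++ [z]) = pathEdges A L ++ [edgeOf A w z]
  | [], h => by simp at h
  | [x], h => by simp_all
  | x :: y :: t, h => by
    rw [List.getLast?_cons_cons] at h
    rw [List.cons_append, List.cons_append, pathEdges_cons_cons, ← List.cons_append,
      pathEdges_append_singleton z h, pathEdges_cons_cons, List.cons_append]

variable {A}

lemma incident_edgeOf_iff {v u w : Pt d} : Incident v (edgeOf A u w) ↔ v = u ∨ v = w := by
  unfold edgeOf Incident; split_ifs <;> simp [eq_comm, or_comm]

lemma mem_of_incident_of_mem_pathEdges {v : Pt d} {e : Pt d × Pt d} (hv : Incident v e) :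
    ∀ {L : List (Pt d)}, e ∈ pathEdges A L → v ∈ L
  | [], he | [_], he => by simp at he
  | x :: y :: t, he => by
    rcases List.mem_cons.mp he with rfl | he
    · rcases incident_edgeOf_iff.mp hv with rfl | rfl <;> simp
    · exact List.mem_cons_of_mem _ (mem_of_incident_of_mem_pathEdges hv he)

lemma exists_incident_of_mem {p : Pt d} :
    ∀ {L : List (Pt d)}, 2 ≤ L.length → p ∈ L → ∃ e ∈ pathEdges A L, Incident p e
  | [], h, _ | [_], h, _ => by simp at h
  | x :: y :: t, _, hp => by
    have hxy : Incident x (edgeOf A x y) ∧ Incident y (edgeOf A x y) :=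
      ⟨incident_edgeOf_iff.mpr (Or.inl rfl), incident_edgeOf_iff.mpr (Or.inr rfl)⟩
    rcases List.mem_cons.mp hp with rfl | hp
    · exact ⟨_, List.mem_cons_self, hxy.1⟩
    rcases t with _ | ⟨z, t⟩
    · obtain rfl : p = y := by simpa using hp
      exact ⟨_, List.mem_cons_self, hxy.2⟩
    · obtain ⟨e, he, hpe⟩ := exists_incident_of_mem (L := y :: z :: t) (by simp) hp
      exact ⟨e, List.mem_cons_of_mem _ he, hpe⟩

lemma nodup_pathEdges : ∀ {L : List (Pt d)}, L.Nodup → (pathEdges A L).Nodup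
  | [], _ | [_], _ => by simp
  | x :: y :: t, h => by
    have hx : x ∉ y :: t := (List.nodup_cons.mp h).1
    refine List.Nodup.cons (fun hmem => hx ?_) (nodup_pathEdges (List.nodup_cons.mp h).2)
    exact mem_of_incident_of_mem_pathEdges (incident_edgeOf_iff.mpr (Or.inl rfl)) hmem

lemma incident_of_head?_pathEdges {u : Pt d} {t : List (Pt d)} {e : Pt d × Pt d}
    (he : (pathEdges A (u :: t)).head? = some e) : Incident u e := by
  rcases t with _ | ⟨w, t⟩
  · simp at he
  · simp only [pathEdges_cons_cons, List.head?_cons, Option.some.injEq] at he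
    exact he ▸ incident_edgeOf_iff.mpr (Or.inl rfl)

lemma incident_of_getLast?_pathEdges {z : Pt d} {e : Pt d × Pt d} :
    ∀ {L : List (Pt d)}, L.getLast? = some z → (pathEdges A L).getLast? = some e →
      Incident z e
  | [], _, he | [_], _, he => by simp at he
  | [x, y], hz, he => by
    simp only [List.getLast?_cons_cons, List.getLast?_singleton, Option.some.injEq] at hz
    simp only [pathEdges_cons_cons, pathEdges_singleton, List.getLast?_singleton,
      Option.some.injEq] at he
    exact he ▸ incident_edgeOf_iff.mpr (Or.inr hz.symm)
  | x :: y :: y' :: t, hz, he => by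
    rw [List.getLast?_cons_cons] at hz
    rw [pathEdges_cons_cons, pathEdges_cons_cons, List.getLast?_cons_cons,
      ← pathEdges_cons_cons] at he
    exact incident_of_getLast?_pathEdges hz he

lemma ne_of_head?_of_getLast? {u z : Pt d} {L : List (Pt d)} (hL : L.Nodup)
    (hlen : 2 ≤ L.length) (hu : L.head? = some u) (hz : L.getLast? = some z) : u ≠ z := by
  rcases L with _ | ⟨x, _ | ⟨y, t⟩⟩
  · simp at hlen
  · simp at hlen
  · rintro rfl
    simp only [List.head?_cons, Option.some.injEq] at hu
    rw [List.getLast?_cons_cons] at hz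
    exact (List.nodup_cons.mp hL).1 (hu ▸ List.mem_of_getLast? hz)

end PathEdges

section Subgraphs

variable {d : ℕ} {A B : Finset (Pt d)} {M N G S : Finset (Pt d × Pt d)}

lemma Crosses.ne (hAB : Disjoint A B) {u v : Pt d} (h : Crosses A B u v) : u ≠ v := by
  rintro rfl
  rcases h with ⟨hA, hB⟩ | ⟨hB, hA⟩ <;> exact Finset.disjoint_left.mp hAB hA hB

lemma Crosses.mem_union {u v : Pt d} (h : Crosses A B u v) : u ∈ A ∪ B ∧ v ∈ A ∪ B := by
  rcases h with ⟨hu, hv⟩ | ⟨hu, hv⟩ <;> simp [hu, hv]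

/-- The matching edges at the vertices of `G` need not lie in `G` (that is `ClosedIn G M`),
so that removing a single matching edge, to cut a cycle open, preserves the property. -/
structure IsAltSubgraph {d : ℕ} (M N G : Finset (Pt d × Pt d)) : Prop where
  mem_or_mem : ∀ e ∈ G, e ∈ M ∨ e ∈ N
  not_mem_of_mem : ∀ e ∈ G, e ∈ M → e ∉ N
  exists_mem_right : ∀ v, Touches G v → ∃ f ∈ G, f ∈ N ∧ Incident v f

lemma IsAltSubgraph.sdiff (hG : IsAltSubgraph M N G)
    (hS : ∀ f ∈ S, f ∈ N → ∀ v, Incident v f → ∀ e ∈ G, Incident v e → e ∈ S) :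
    IsAltSubgraph M N (G \ S) where
  mem_or_mem e he := hG.mem_or_mem e (Finset.mem_sdiff.mp he).1
  not_mem_of_mem e he := hG.not_mem_of_mem e (Finset.mem_sdiff.mp he).1
  exists_mem_right := by
    rintro v ⟨e, he, hve⟩
    rw [Finset.mem_sdiff] at he
    obtain ⟨f, hfG, hfN, hvf⟩ := hG.exists_mem_right v ⟨e, he.1, hve⟩
    exact ⟨f, Finset.mem_sdiff.mpr ⟨hfG, fun hfS => he.2 (hS f hfS hfN v hvf e he.1 hve)⟩,
      hfN, hvf⟩

lemma IsAltSubgraph.sdiff_pair (hG : IsAltSubgraph M N G) {g m : Pt d × Pt d} {u w : Pt d}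
    (hmN : m ∉ N) (hg : ∀ x, Incident x g → x = u ∨ x = w)
    (hu : ∀ e ∈ G, Incident u e → e = g)
    (hw : ∀ e ∈ G, Incident w e → e = g ∨ e = m) : IsAltSubgraph M N (G \ {g, m}) :=
  hG.sdiff fun f hf hfN v hvf e he hve => by
    obtain rfl : f = g := by
      simp only [Finset.mem_insert, Finset.mem_singleton] at hf
      exact hf.resolve_right fun h => hmN (h ▸ hfN)
    rcases hg v hvf with rfl | rfl
    · simp [hu e he hve]
    · rcases hw e he hve with rfl | rfl <;> simp

lemma Touches.mono {v : Pt d} (hv : Touches S v) (hSG : S ⊆ G) : Touches G v :=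
  let ⟨e, he, hve⟩ := hv
  ⟨e, hSG he, hve⟩

def ClosedIn {d : ℕ} (S G : Finset (Pt d × Pt d)) : Prop :=
  ∀ v, Touches S v → ∀ e ∈ G, Incident v e → e ∈ S

lemma ClosedIn.sdiff {H : Finset (Pt d × Pt d)} (hG : ClosedIn G H) (hS : ClosedIn S G) :
    ClosedIn (G \ S) H := by
  rintro v ⟨e', he', hve'⟩ e he hve
  rw [Finset.mem_sdiff] at he' ⊢
  exact ⟨hG v ⟨e', he'.1, hve'⟩ e he hve,
    fun heS => he'.2 (hS v ⟨e, heS, hve⟩ e' he'.1 hve')⟩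

lemma IsAltSubgraph.sdiff_of_closedIn (hG : IsAltSubgraph M N G) (hS : ClosedIn S G) :
    IsAltSubgraph M N (G \ S) :=
  hG.sdiff fun f hf _ v hv => hS v ⟨f, hf, hv⟩

end Subgraphs

section Walk

variable {d : ℕ} {A B : Finset (Pt d)} {M N G : Finset (Pt d × Pt d)}

structure IsPathComponent {d : ℕ} (A B : Finset (Pt d)) (M G : Finset (Pt d × Pt d))
    (L : List (Pt d)) : Prop where
  isAltPath : IsAltPath A B M L
  getLast_unmatched : ∀ z, L.getLast? = some z → ∀ e ∈ G, e ∈ M → ¬ Incident z e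
  subset : ∀ e ∈ pathEdges A L, e ∈ G
  closed : ∀ v ∈ L, ∀ e ∈ G, Incident v e → e ∈ pathEdges A L

lemma IsPathComponent.touches {L : List (Pt d)} (hL : IsPathComponent A B M G L) {p : Pt d}
    (hp : p ∈ L) : Touches G p :=
  let ⟨e, he, hpe⟩ := exists_incident_of_mem hL.isAltPath.1 hp
  ⟨e, hL.subset e he, hpe⟩

lemma isPathComponent_pair (hAB : Disjoint A B) {u w : Pt d} {g : Pt d × Pt d} (hgG : g ∈ G)
    (hg : edgeOf A u w = g) (huw : Crosses A B u w) (hu : ∀ e ∈ G, Incident u e → e = g)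
    (hw : ∀ e ∈ G, Incident w e → e = g) (hwM : ∀ e ∈ G, e ∈ M → ¬ Incident w e) :
    IsPathComponent A B M G [u, w] where
  isAltPath := by
    refine ⟨le_rfl, by simpa using huw.ne hAB, by simpa using huw.mem_union,
      List.isChain_pair.mpr huw, List.isChain_singleton _⟩
  getLast_unmatched z hz := by
    simp only [List.getLast?_cons_cons, List.getLast?_singleton, Option.some.injEq] at hz
    exact hz ▸ hwM
  subset e he := by simp_all
  closed v hv e he hve := by
    simp only [List.mem_cons, List.not_mem_nil, or_false] at hv
    rcases hv with rfl | rfl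
    · simp [hu e he hve, hg]
    · simp [hw e he hve, hg]

lemma IsAltPath.cons_cons (hAB : Disjoint A B) {u w u' : Pt d} {t : List (Pt d)}
    (hL : IsAltPath A B M (u' :: t)) (hu : u ∉ u' :: t) (hw : w ∉ u' :: t)
    (huw : Crosses A B u w) (hwu' : Crosses A B w u')
    (hgM : edgeOf A u w ∉ M) (hmM : edgeOf A w u' ∈ M)
    (hhead : ∀ e, (pathEdges A (u' :: t)).head? = some e → e ∉ M) :
    IsAltPath A B M (u :: w :: u' :: t) := by
  obtain ⟨hlen, hnodup, hmem, hcross, halt⟩ := hL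
  refine ⟨by simp, ?_, ?_, ?_, ?_⟩
  · refine List.nodup_cons.mpr ⟨?_, List.nodup_cons.mpr ⟨hw, hnodup⟩⟩
    intro h
    rcases List.mem_cons.mp h with h | h
    exacts [huw.ne hAB h, hu h]
  · intro p hp
    rcases List.mem_cons.mp hp with rfl | hp
    · exact huw.mem_union.1
    rcases List.mem_cons.mp hp with rfl | hp
    exacts [hwu'.mem_union.1, hmem p hp]
  · exact List.isChain_cons_cons.mpr ⟨huw, List.isChain_cons_cons.mpr ⟨hwu', hcross⟩⟩
  · rw [pathEdges_cons_cons, pathEdges_cons_cons]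
    refine List.isChain_cons_cons.mpr ⟨by simp [AltRel, hgM, hmM],
      List.isChain_cons.mpr ⟨fun e he => ?_, halt⟩⟩
    simpa [AltRel, hmM] using hhead e he

lemma IsPathComponent.cons_cons (hAB : Disjoint A B) {u w u' : Pt d} {t : List (Pt d)}
    {g m : Pt d × Pt d} (hL : IsPathComponent A B M (G \ {g, m}) (u' :: t))
    (hgG : g ∈ G) (hmG : m ∈ G) (hgM : g ∉ M) (hmM : m ∈ M)
    (hg : edgeOf A u w = g) (hm : edgeOf A w u' = m)
    (huw : Crosses A B u w) (hwu' : Crosses A B w u')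
    (hu : ∀ e ∈ G, Incident u e → e = g) (hw : ∀ e ∈ G, Incident w e → e = g ∨ e = m)
    (hu'M : ∀ e ∈ G \ {g, m}, e ∈ M → ¬ Incident u' e) :
    IsPathComponent A B M G (u :: w :: u' :: t) := by
  have hout : ∀ v ∈ u' :: t, v ≠ u ∧ v ≠ w := by
    intro v hv
    obtain ⟨e, he, hve⟩ := hL.touches hv
    rw [Finset.mem_sdiff, Finset.mem_insert, Finset.mem_singleton] at he
    exact ⟨fun h => he.2 (Or.inl (hu e he.1 (h ▸ hve))),
      fun h => he.2 (hw e he.1 (h ▸ hve))⟩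
  have hedges : pathEdges A (u :: w :: u' :: t) = g :: m :: pathEdges A (u' :: t) := by
    rw [pathEdges_cons_cons, pathEdges_cons_cons, hg, hm]
  refine ⟨hL.isAltPath.cons_cons hAB (fun h => (hout u h).1 rfl) (fun h => (hout w h).2 rfl)
    huw hwu' (hg ▸ hgM) (hm ▸ hmM) fun e he heM => ?_, ?_, ?_, ?_⟩
  · exact hu'M e (hL.subset e (List.mem_of_mem_head? he)) heM (incident_of_head?_pathEdges he)
  · intro z hz e he heM hze
    rw [List.getLast?_cons_cons, List.getLast?_cons_cons] at hz
    by_cases hegm : e = g ∨ e = m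
    · rcases hegm with rfl | rfl
      · exact hgM heM
      rcases incident_edgeOf_iff.mp (hm ▸ hze) with rfl | rfl
      · exact (hout z (List.mem_of_getLast? hz)).2 rfl
      · exact ne_of_head?_of_getLast? hL.isAltPath.2.1 hL.isAltPath.1 rfl hz rfl
    · exact hL.getLast_unmatched z hz e (by simp [he, hegm]) heM hze
  · rw [hedges]
    intro e he
    rcases List.mem_cons.mp he with rfl | he
    · exact hgG
    rcases List.mem_cons.mp he with rfl | he
    exacts [hmG, Finset.sdiff_subset (hL.subset e he)]
  · intro v hv e he hve
    rw [hedges]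
    by_cases hegm : e = g ∨ e = m
    · rcases hegm with rfl | rfl <;> simp
    have he' : e ∈ G \ {g, m} := by simp [he, hegm]
    rcases List.mem_cons.mp hv with rfl | hv
    · exact (hegm (Or.inl (hu e he hve))).elim
    rcases List.mem_cons.mp hv with rfl | hv
    · exact (hegm (hw e he hve)).elim
    · exact List.mem_cons_of_mem _ (List.mem_cons_of_mem _ (hL.closed v hv e he' hve))

theorem IsAltSubgraph.exists_isPathComponent (hAB : Disjoint A B) (hM : IsMatching A B M)
    (hN : IsMatching A B N) (hG : IsAltSubgraph M N G) {u : Pt d} (hu : Touches G u)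
    (huM : ∀ e ∈ G, e ∈ M → ¬ Incident u e) :
    ∃ t, IsPathComponent A B M G (u :: t) := by
  induction G using Finset.strongInduction generalizing u with
  | H G ih =>
  obtain ⟨g, hgG, hgN, hug⟩ := hG.exists_mem_right u hu
  have hgM : g ∉ M := fun h => hG.not_mem_of_mem g hgG h hgN
  obtain ⟨w, hwg, -, huw, hg, hends_g⟩ := exists_other_endpoint hAB (hN.1 g hgN) hug
  have hu : ∀ e ∈ G, Incident u e → e = g := fun e he hue =>
    (hG.mem_or_mem e he).elim (fun h => (huM e he h hue).elim)
      (fun h => hN.eq_of_incident hAB h hgN hue hug)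
  by_cases hwM : ∃ m ∈ G, m ∈ M ∧ Incident w m
  swap
  · simp only [not_exists, not_and] at hwM
    refine ⟨[w], isPathComponent_pair hAB hgG hg huw hu (fun e he hwe => ?_) hwM⟩
    exact (hG.mem_or_mem e he).elim (fun h => (hwM e he h hwe).elim)
      (fun h => hN.eq_of_incident hAB h hgN hwe hwg)
  obtain ⟨m, hmG, hmM, hwm⟩ := hwM
  have hmN : m ∉ N := hG.not_mem_of_mem m hmG hmM
  obtain ⟨u', hu'm, -, hwu', hm, -⟩ := exists_other_endpoint hAB (hM.1 m hmM) hwm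
  have hw : ∀ e ∈ G, Incident w e → e = g ∨ e = m := fun e he hwe =>
    (hG.mem_or_mem e he).elim (fun h => Or.inr (hM.eq_of_incident hAB h hmM hwe hwm))
      (fun h => Or.inl (hN.eq_of_incident hAB h hgN hwe hwg))
  have hG' := hG.sdiff_pair hmN hends_g hu hw
  have hu'G' : Touches (G \ {g, m}) u' := by
    obtain ⟨f, hfG, hfN, hu'f⟩ := hG.exists_mem_right u' ⟨m, hmG, hu'm⟩
    refine ⟨f, Finset.mem_sdiff.mpr ⟨hfG, ?_⟩, hu'f⟩
    simp only [Finset.mem_insert, Finset.mem_singleton]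
    rintro (rfl | rfl)
    · rcases hends_g u' hu'f with rfl | rfl
      · exact huM m hmG hmM hu'm
      · exact hwu'.ne hAB rfl
    · exact hmN hfN
  have hu'M : ∀ e ∈ G \ {g, m}, e ∈ M → ¬ Incident u' e := fun e he heM hu'e => by
    simp [hM.eq_of_incident hAB heM hmM hu'e hu'm] at he
  have hG'G : G \ {g, m} ⊂ G :=
    Finset.sdiff_ssubset (by simp [Finset.insert_subset_iff, hgG, hmG]) ⟨g, by simp⟩
  obtain ⟨t, ht⟩ := ih _ hG'G hG' hu'G' hu'M
  exact ⟨w :: u' :: t, ht.cons_cons hAB hgG hmG hgM hmM hg hm huw hwu' hu hw hu'M⟩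

end Walk

section Components

variable {d : ℕ} {A B : Finset (Pt d)} {M N G : Finset (Pt d × Pt d)}

lemma IsPathComponent.closedIn {L : List (Pt d)} (hL : IsPathComponent A B M G L) :
    ClosedIn (pathEdges A L).toFinset G := by
  rintro v ⟨e, he, hve⟩ e' he' hve'
  exact List.mem_toFinset.mpr
    (hL.closed v (mem_of_incident_of_mem_pathEdges hve (List.mem_toFinset.mp he)) e' he' hve')

lemma four_le_length_of_alt {L : List (Pt d)} (hlen : 2 ≤ L.length)
    (halt : (pathEdges A L).IsChain (AltRel M))
    (hhead : ∀ e, (pathEdges A L).head? = some e → e ∉ M)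
    (hlast : ∀ e, (pathEdges A L).getLast? = some e → e ∉ M)
    (hpair : ∀ u v, L ≠ [u, v]) : 4 ≤ L.length := by
  match L, hlen with
  | [u, v], _ => exact (hpair u v rfl).elim
  | [u, v, w], _ =>
    have h := List.isChain_pair.mp (by simpa using halt)
    exact (hhead _ rfl (h.mpr (hlast _ rfl))).elim
  | _ :: _ :: _ :: _ :: _, _ => simp

lemma IsPathComponent.isAltCycle (hAB : Disjoint A B) {b z : Pt d} {t : List (Pt d)}
    (hL : IsPathComponent A B M G (b :: t)) (hz : (b :: t).getLast? = some z)
    (hbM : ∀ e ∈ G, e ∈ M → ¬ Incident b e) (hzA : z ∈ A) (hbB : b ∈ B)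
    (hm : (z, b) ∈ M) :
    cycleEdges A (b :: t) = pathEdges A (b :: t) ++ [(z, b)] ∧ IsAltCycle A B M (b :: t) := by
  have htake : (b :: t).take 1 = [b] := by simp
  have hcyc : cycleEdges A (b :: t) = pathEdges A (b :: t) ++ [(z, b)] := by
    rw [cycleEdges, htake, pathEdges_append_singleton A b hz, edgeOf, if_pos hzA]
  obtain ⟨hlen, hnodup, hmem, hcross, halt⟩ := hL.isAltPath
  have hhead : ∀ e, (pathEdges A (b :: t)).head? = some e → e ∉ M := fun e he heM =>
    hbM e (hL.subset e (List.mem_of_mem_head? he)) heM (incident_of_head?_pathEdges he)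
  have hlast : ∀ e, (pathEdges A (b :: t)).getLast? = some e → e ∉ M := fun e he heM =>
    hL.getLast_unmatched z hz e (hL.subset e (List.mem_of_getLast? he)) heM
      (incident_of_getLast?_pathEdges hz he)
  refine ⟨hcyc, four_le_length_of_alt hlen halt hhead hlast ?_, hnodup, hmem, ?_, ?_, ?_⟩
  · rintro u v h
    obtain ⟨rfl, rfl⟩ := List.cons_eq_cons.mp h
    obtain rfl : v = z := by simpa using hz
    have hbA : b ∉ A := fun h => Finset.disjoint_left.mp hAB h hbB
    exact hhead _ (by simp [edgeOf, hbA]) hm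
  · rw [htake]
    refine hcross.append (List.isChain_singleton _) fun x hx y hy => ?_
    obtain rfl : z = x := by simpa [hz] using hx
    obtain rfl : b = y := by simpa using hy
    exact Or.inl ⟨hzA, hbB⟩
  · rw [hcyc]
    refine halt.append (List.isChain_singleton _) fun x hx y hy => ?_
    obtain rfl : (z, b) = y := by simpa using hy
    simpa [AltRel, hm] using hlast x hx
  · intro e f he hf
    rw [hcyc, List.getLast?_concat, Option.some.injEq] at hf
    subst hf
    obtain ⟨e', he'⟩ : ∃ e', (pathEdges A (b :: t)).head? = some e' := by
      rcases t with _ | ⟨y, t⟩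
      · simp at hlen
      · exact ⟨_, rfl⟩
    rw [hcyc, List.head?_append, he', Option.some_or, Option.some.injEq] at he
    subst he
    simpa [AltRel, hm] using hhead e' he'

lemma IsPathComponent.incident_getLast {L : List (Pt d)} {m : Pt d × Pt d} {z : Pt d}
    (hL : IsPathComponent A B M (G \ {m}) L) (hGM : ClosedIn G M)
    (hfree : ∀ v, Touches G v → ¬ IsFree M v) (hz : L.getLast? = some z) : Incident z m := by
  have hzG : Touches G z := (hL.touches (List.mem_of_getLast? hz)).mono Finset.sdiff_subset
  obtain ⟨e, heM, hze⟩ : ∃ e ∈ M, Incident z e := by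
    simpa [isFree_iff_forall_not_incident] using hfree z hzG
  obtain rfl : e = m := by
    by_contra hne
    exact hL.getLast_unmatched z hz e (by simp [hGM z hzG e heM hze, hne]) heM hze
  exact hze

lemma IsPathComponent.closedIn_append_singleton {L : List (Pt d)} {m : Pt d × Pt d}
    (hL : IsPathComponent A B M (G \ {m}) L) (hmL : ∀ v, Incident v m → v ∈ L) :
    ClosedIn (pathEdges A L ++ [m]).toFinset G := by
  rintro v ⟨e, he, hve⟩ e' he' hve'
  rw [List.mem_toFinset, List.mem_append, List.mem_singleton] at he ⊢
  have hv : v ∈ L := he.elim (mem_of_incident_of_mem_pathEdges hve) fun h => hmL v (h ▸ hve)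
  by_cases he'm : e' = m
  · exact Or.inr he'm
  · exact Or.inl (hL.closed v hv e' (by simp [he', he'm]) hve')

lemma IsAltSubgraph.exists_augPath (hAB : Disjoint A B) (hM : IsMatching A B M)
    (hN : IsMatching A B N) (hG : IsAltSubgraph M N G) (hGM : ClosedIn G M) {v : Pt d}
    (hv : Touches G v) (hfree : IsFree M v) :
    ∃ L, IsAugPath A B M L ∧ IsPathComponent A B M G L := by
  obtain ⟨t, ht⟩ := hG.exists_isPathComponent hAB hM hN hv fun e _ heM =>
    isFree_iff_forall_not_incident.mp hfree e heM
  refine ⟨v :: t, ⟨ht.isAltPath, fun p hp => ?_, fun z hz => ?_⟩, ht⟩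
  · obtain rfl : v = p := by simpa using hp
    exact hfree
  · refine isFree_iff_forall_not_incident.mpr fun e heM hze => ?_
    exact ht.getLast_unmatched z hz e (hGM z (ht.touches (List.mem_of_getLast? hz)) e heM hze)
      heM hze

/-- Cut the cycle open at the matching edge `(z, b)`: the path component of `G \ {(z, b)}`
starting at `b` must end at `z`, the only other vertex that lost its matching edge. -/
lemma IsAltSubgraph.exists_altCycle (hAB : Disjoint A B) (hM : IsMatching A B M)
    (hN : IsMatching A B N) (hG : IsAltSubgraph M N G) (hGM : ClosedIn G M)
    (hfree : ∀ v, Touches G v → ¬ IsFree M v) {m : Pt d × Pt d} (hmG : m ∈ G)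
    (hmM : m ∈ M) :
    ∃ C, IsAltCycle A B M C ∧ (cycleEdges A C).Nodup ∧ (∀ e ∈ cycleEdges A C, e ∈ G) ∧
      ClosedIn (cycleEdges A C).toFinset G := by
  obtain ⟨z, b⟩ := m
  obtain ⟨hzA, hbB⟩ := hM.1 _ hmM
  have hmN := hG.not_mem_of_mem _ hmG hmM
  have hG' : IsAltSubgraph M N (G \ {(z, b)}) := hG.sdiff fun f hf hfN => by
    rw [Finset.mem_singleton] at hf
    exact (hmN (hf ▸ hfN)).elim
  have hbM : ∀ e ∈ G \ {(z, b)}, e ∈ M → ¬ Incident b e := fun e he heM hbe => by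
    simp [hM.eq_of_incident hAB heM hmM hbe (Or.inr rfl)] at he
  have hbG' : Touches (G \ {(z, b)}) b := by
    obtain ⟨f, hfG, hfN, hbf⟩ := hG.exists_mem_right b ⟨_, hmG, Or.inr rfl⟩
    refine ⟨f, Finset.mem_sdiff.mpr ⟨hfG, fun h => ?_⟩, hbf⟩
    exact hmN (Finset.mem_singleton.mp h ▸ hfN)
  obtain ⟨t, ht⟩ := hG'.exists_isPathComponent hAB hM hN hbG' hbM
  obtain ⟨z', hz'⟩ : ∃ z', (b :: t).getLast? = some z' :=
    ⟨_, List.getLast?_eq_some_getLast (List.cons_ne_nil b t)⟩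
  obtain rfl : z = z' := (ht.incident_getLast hGM hfree hz').resolve_right
    (ne_of_head?_of_getLast? ht.isAltPath.2.1 ht.isAltPath.1 rfl hz')
  obtain ⟨hcyc, hC⟩ := ht.isAltCycle hAB hz' hbM hzA hbB hmM
  have hsub : ∀ e ∈ pathEdges A (b :: t), e ∈ G ∧ e ≠ (z, b) := fun e he => by
    simpa using ht.subset e he
  refine ⟨b :: t, hC, ?_, ?_, ?_⟩
  · rw [hcyc, List.nodup_append]
    exact ⟨nodup_pathEdges ht.isAltPath.2.1, List.nodup_singleton _,
      fun e he _ he' => (List.mem_singleton.mp he') ▸ (hsub e he).2⟩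
  · rw [hcyc]
    intro e he
    rcases List.mem_append.mp he with he | he
    exacts [(hsub e he).1, (List.mem_singleton.mp he) ▸ hmG]
  · rw [hcyc]
    refine ht.closedIn_append_singleton fun v hv => ?_
    rcases hv with rfl | rfl
    exacts [List.mem_of_getLast? hz', List.mem_cons_self]

end Components

section Decomposition

variable {d : ℕ} {A B : Finset (Pt d)} {M N G : Finset (Pt d × Pt d)}

lemma sum_eq_sum_map_add_sum_sdiff {ι : Type*} [DecidableEq ι] {G : Finset ι} {E : List ι}
    (hE : E.Nodup) (hEG : ∀ e ∈ E, e ∈ G) (w : ι → ℝ) :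
    ∑ e ∈ G, w e = (E.map w).sum + ∑ e ∈ G \ E.toFinset, w e := by
  rw [← List.sum_toFinset w hE, add_comm,
    Finset.sum_sdiff fun e he => hEG e (List.mem_toFinset.mp he)]

lemma pathEdges_ne_nil {A : Finset (Pt d)} {L : List (Pt d)} (hL : 2 ≤ L.length) :
    pathEdges A L ≠ [] :=
  List.ne_nil_of_length_pos (by rw [length_pathEdges]; omega)

def IsDecomposition {d : ℕ} (A B : Finset (Pt d)) (M : Finset (Pt d × Pt d))
    (w : Pt d × Pt d → ℝ) (G : Finset (Pt d × Pt d)) (Ps Cs : List (List (Pt d))) : Prop :=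
  (∀ L ∈ Ps, IsAugPath A B M L) ∧ (∀ C ∈ Cs, IsAltCycle A B M C) ∧
    ∑ e ∈ G, w e = (Ps.map fun L => ((pathEdges A L).map w).sum).sum +
      (Cs.map fun C => ((cycleEdges A C).map w).sum).sum

variable {w : Pt d × Pt d → ℝ} {Ps Cs : List (List (Pt d))}

lemma IsDecomposition.cons_path {L : List (Pt d)}
    (h : IsDecomposition A B M w (G \ (pathEdges A L).toFinset) Ps Cs)
    (hL : IsAugPath A B M L) (hLG : ∀ e ∈ pathEdges A L, e ∈ G) :
    IsDecomposition A B M w G (L :: Ps) Cs := by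
  obtain ⟨hPs, hCs, hsum⟩ := h
  refine ⟨List.forall_mem_cons.mpr ⟨hL, hPs⟩, hCs, ?_⟩
  rw [sum_eq_sum_map_add_sum_sdiff (nodup_pathEdges hL.1.2.1) hLG, hsum, List.map_cons,
    List.sum_cons]
  ring

lemma IsDecomposition.cons_cycle {C : List (Pt d)}
    (h : IsDecomposition A B M w (G \ (cycleEdges A C).toFinset) Ps Cs)
    (hC : IsAltCycle A B M C) (hnodup : (cycleEdges A C).Nodup)
    (hCG : ∀ e ∈ cycleEdges A C, e ∈ G) :
    IsDecomposition A B M w G Ps (C :: Cs) := by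
  obtain ⟨hPs, hCs, hsum⟩ := h
  refine ⟨hPs, List.forall_mem_cons.mpr ⟨hC, hCs⟩, ?_⟩
  rw [sum_eq_sum_map_add_sum_sdiff hnodup hCG, hsum, List.map_cons, List.sum_cons]
  ring

lemma IsAltSubgraph.exists_mem_left (hG : IsAltSubgraph M N G) (hGM : ClosedIn G M)
    (hfree : ∀ v, Touches G v → ¬ IsFree M v) (hne : G.Nonempty) : ∃ m ∈ G, m ∈ M := by
  obtain ⟨e, he⟩ := hne
  rcases hG.mem_or_mem e he with h | -
  · exact ⟨e, he, h⟩
  obtain ⟨m, hmM, hm⟩ : ∃ m ∈ M, Incident e.1 m := by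
    simpa [isFree_iff_forall_not_incident] using hfree e.1 ⟨e, he, Or.inl rfl⟩
  exact ⟨m, hGM _ ⟨e, he, Or.inl rfl⟩ m hmM hm, hmM⟩

theorem IsAltSubgraph.exists_decomposition (hAB : Disjoint A B) (hM : IsMatching A B M)
    (hN : IsMatching A B N) (w : Pt d × Pt d → ℝ) (hG : IsAltSubgraph M N G)
    (hGM : ClosedIn G M) :
    ∃ Ps Cs, IsDecomposition A B M w G Ps Cs ∧
      ((∃ v, Touches G v ∧ IsFree M v) → Ps ≠ []) := by
  induction G using Finset.strongInduction with
  | H G ih =>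
  have hrest : ∀ E : List (Pt d × Pt d), E ≠ [] → (∀ e ∈ E, e ∈ G) →
      ClosedIn E.toFinset G → ∃ Ps Cs, IsDecomposition A B M w (G \ E.toFinset) Ps Cs := by
    intro E hne hEG hclosed
    obtain ⟨e, he⟩ := List.exists_mem_of_ne_nil E hne
    have hss : G \ E.toFinset ⊂ G := Finset.sdiff_ssubset
      (fun e he => hEG e (List.mem_toFinset.mp he)) ⟨e, List.mem_toFinset.mpr he⟩
    obtain ⟨Ps, Cs, h, -⟩ := ih _ hss (hG.sdiff_of_closedIn hclosed) (hGM.sdiff hclosed)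
    exact ⟨Ps, Cs, h⟩
  by_cases hfree : ∃ v, Touches G v ∧ IsFree M v
  · obtain ⟨v, hv, hvfree⟩ := hfree
    obtain ⟨L, hLaug, hL⟩ := hG.exists_augPath hAB hM hN hGM hv hvfree
    obtain ⟨Ps, Cs, h⟩ := hrest _ (pathEdges_ne_nil hL.isAltPath.1) hL.subset hL.closedIn
    exact ⟨L :: Ps, Cs, h.cons_path hLaug hL.subset, fun _ => List.cons_ne_nil _ _⟩
  simp only [not_exists, not_and] at hfree
  have hnone : ¬ ∃ v, Touches G v ∧ IsFree M v := fun ⟨v, hv, hvf⟩ => hfree v hv hvf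
  obtain rfl | hne := G.eq_empty_or_nonempty
  · exact ⟨[], [], ⟨by simp, by simp, by simp⟩, hnone.elim⟩
  obtain ⟨m, hmG, hmM⟩ := hG.exists_mem_left hGM hfree hne
  obtain ⟨C, hC, hnodup, hCG, hclosed⟩ := hG.exists_altCycle hAB hM hN hGM hfree hmG hmM
  obtain ⟨Ps, Cs, h⟩ := hrest _ (pathEdges_ne_nil (by
    simp only [List.length_append, List.length_take]; have := hC.1; omega)) hCG hclosed
  exact ⟨Ps, C :: Cs, h.cons_cycle hC hnodup hCG, hnone.elim⟩

end Decomposition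

section Costs

variable {d : ℕ}

def adjWeight (c0 θ : ℝ) (M : Finset (Pt d × Pt d)) (e : Pt d × Pt d) : ℝ :=
  (if e ∈ M then -dist e.1 e.2 else dist e.1 e.2) + c0 * θ * dist e.1 e.2

lemma adjCost_eq_sum_map (c0 θ : ℝ) (M : Finset (Pt d × Pt d)) (E : List (Pt d × Pt d)) :
    adjCost c0 θ M E = (E.map (adjWeight c0 θ M)).sum := by
  induction E with
  | nil => simp [adjCost, netCost, eucLen]
  | cons e E ih =>
    simp only [adjCost, netCost, eucLen, List.map_cons, List.sum_cons] at ih ⊢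
    rw [← ih, adjWeight]
    ring

lemma netCost_le_adjCost {c0 θ : ℝ} (hc : 0 ≤ c0 * θ) (M : Finset (Pt d × Pt d))
    (E : List (Pt d × Pt d)) : netCost M E ≤ adjCost c0 θ M E :=
  le_add_of_nonneg_right <| mul_nonneg hc <| List.sum_nonneg fun _ hx => by
    obtain ⟨e, -, rfl⟩ := List.mem_map.mp hx
    exact dist_nonneg

lemma matchCost_nonneg (M : Finset (Pt d × Pt d)) : 0 ≤ matchCost M :=
  Finset.sum_nonneg fun _ _ => dist_nonneg

lemma sum_symmDiff_ite_mem {ι : Type*} [DecidableEq ι] (s t : Finset ι) (f : ι → ℝ) :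
    ∑ e ∈ symmDiff s t, (if e ∈ s then -f e else f e) =
      ∑ e ∈ t, f e - ∑ e ∈ s, f e := by
  rw [symmDiff_def, Finset.sup_eq_union, Finset.sum_union disjoint_sdiff_sdiff,
    ← Finset.sum_sdiff_sub_sum_sdiff,
    Finset.sum_congr rfl fun e he => if_pos (Finset.mem_sdiff.mp he).1,
    Finset.sum_congr rfl fun e he => if_neg (Finset.mem_sdiff.mp he).2, Finset.sum_neg_distrib]
  ring

lemma sum_symmDiff_le {ι : Type*} [DecidableEq ι] (s t : Finset ι) {f : ι → ℝ}
    (hf : ∀ e, 0 ≤ f e) :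
    ∑ e ∈ symmDiff s t, f e ≤ ∑ e ∈ s, f e + ∑ e ∈ t, f e := by
  rw [← Finset.sum_union_inter]
  exact le_add_of_le_of_nonneg
    (Finset.sum_le_sum_of_subset_of_nonneg symmDiff_le_sup fun e _ _ => hf e)
    (Finset.sum_nonneg fun e _ => hf e)

lemma matchCost_symmDiff {M : Finset (Pt d × Pt d)} {E : List (Pt d × Pt d)} (hE : E.Nodup) :
    matchCost (symmDiff M E.toFinset) = matchCost M + netCost M E := by
  rw [netCost, ← List.sum_toFinset _ hE, Finset.sum_ite, Finset.filter_mem_eq_inter,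
    Finset.filter_notMem_eq_sdiff, Finset.sum_neg_distrib, matchCost, matchCost, symmDiff_def,
    Finset.sup_eq_union, Finset.sum_union disjoint_sdiff_sdiff,
    ← Finset.sum_inter_add_sum_sdiff M E.toFinset, Finset.inter_comm]
  ring

end Costs

section SymmDiff

variable {d : ℕ} {A B : Finset (Pt d)} {M N : Finset (Pt d × Pt d)}

lemma IsMatching.image_fst_eq (hN : IsMatching A B N) (h : A.card ≤ N.card) :
    N.image Prod.fst = A := by
  refine Finset.eq_of_subset_of_card_le (fun a ha => ?_) ?_
  · obtain ⟨e, he, rfl⟩ := Finset.mem_image.mp ha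
    exact (hN.1 e he).1
  · rwa [Finset.card_image_of_injOn fun e he e' he' h => hN.2.1 e he e' he' h]

lemma IsMatching.image_snd_eq (hN : IsMatching A B N) (h : B.card ≤ N.card) :
    N.image Prod.snd = B := by
  refine Finset.eq_of_subset_of_card_le (fun b hb => ?_) ?_
  · obtain ⟨e, he, rfl⟩ := Finset.mem_image.mp hb
    exact (hN.1 e he).2
  · rwa [Finset.card_image_of_injOn fun e he e' he' h => hN.2.2 e he e' he' h]

lemma IsMatching.exists_incident (hN : IsMatching A B N) (hA : A.card ≤ N.card)
    (hB : B.card ≤ N.card) {v : Pt d} (hv : v ∈ A ∪ B) : ∃ f ∈ N, Incident v f := by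
  rcases Finset.mem_union.mp hv with hv | hv
  · obtain ⟨f, hf, rfl⟩ := Finset.mem_image.mp ((hN.image_fst_eq hA).symm ▸ hv)
    exact ⟨f, hf, Or.inl rfl⟩
  · obtain ⟨f, hf, rfl⟩ := Finset.mem_image.mp ((hN.image_snd_eq hB).symm ▸ hv)
    exact ⟨f, hf, Or.inr rfl⟩

lemma not_incident_of_mem_inter (hAB : Disjoint A B) (hM : IsMatching A B M)
    (hN : IsMatching A B N) {v : Pt d} {e f : Pt d × Pt d} (he : e ∈ symmDiff M N)
    (hve : Incident v e) (hfM : f ∈ M) (hfN : f ∈ N) : ¬ Incident v f := by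
  intro hvf
  rcases Finset.mem_symmDiff.mp he with ⟨heM, heN⟩ | ⟨heN, heM⟩
  · exact heN (hM.eq_of_incident hAB heM hfM hve hvf ▸ hfN)
  · exact heM (hN.eq_of_incident hAB heN hfN hve hvf ▸ hfM)

lemma isAltSubgraph_symmDiff (hAB : Disjoint A B) (hM : IsMatching A B M)
    (hN : IsMatching A B N) (hNperf : ∀ v ∈ A ∪ B, ∃ f ∈ N, Incident v f) :
    IsAltSubgraph M N (symmDiff M N) where
  mem_or_mem e he := (Finset.mem_symmDiff.mp he).imp And.left And.left
  not_mem_of_mem e he heM := ((Finset.mem_symmDiff.mp he).resolve_right fun h => h.2 heM).2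
  exists_mem_right := by
    rintro v ⟨e, he, hve⟩
    have hv : v ∈ A ∪ B := (Finset.mem_symmDiff.mp he).elim
      (fun h => hM.mem_union_of_incident h.1 hve) (fun h => hN.mem_union_of_incident h.1 hve)
    obtain ⟨f, hfN, hvf⟩ := hNperf v hv
    refine ⟨f, Finset.mem_symmDiff.mpr (Or.inr ⟨hfN, fun hfM => ?_⟩), hfN, hvf⟩
    exact not_incident_of_mem_inter hAB hM hN he hve hfM hfN hvf

lemma closedIn_symmDiff (hAB : Disjoint A B) (hM : IsMatching A B M) (hN : IsMatching A B N) :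
    ClosedIn (symmDiff M N) M := by
  rintro v ⟨e, he, hve⟩ f hfM hvf
  exact Finset.mem_symmDiff.mpr
    (Or.inl ⟨hfM, fun hfN => not_incident_of_mem_inter hAB hM hN he hve hfM hfN hvf⟩)

lemma exists_free_touches_symmDiff (hAB : Disjoint A B) (hM : IsMatching A B M)
    (hcard : M.card < B.card) (hNperf : ∀ v ∈ A ∪ B, ∃ f ∈ N, Incident v f) :
    ∃ v, Touches (symmDiff M N) v ∧ IsFree M v := by
  obtain ⟨b, hbB, hbM⟩ : ∃ b ∈ B, b ∉ M.image Prod.snd :=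
    Finset.exists_mem_notMem_of_card_lt_card (Finset.card_image_le.trans_lt hcard)
  have hfree : IsFree M b := fun e he =>
    ⟨fun h => Finset.disjoint_left.mp hAB (h ▸ (hM.1 e he).1) hbB,
      fun h => hbM (Finset.mem_image.mpr ⟨e, he, h⟩)⟩
  obtain ⟨f, hfN, hbf⟩ := hNperf b (Finset.mem_union_right _ hbB)
  have hfM : f ∉ M := fun hfM => isFree_iff_forall_not_incident.mp hfree f hfM hbf
  exact ⟨b, ⟨f, Finset.mem_symmDiff.mpr (Or.inr ⟨hfN, hfM⟩), hbf⟩, hfree⟩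

lemma sum_adjWeight_symmDiff_le {c0 θ : ℝ} (hc : 0 ≤ c0 * θ) (M N : Finset (Pt d × Pt d)) :
    ∑ e ∈ symmDiff M N, adjWeight c0 θ M e ≤
      matchCost N - matchCost M + c0 * θ * (matchCost M + matchCost N) := by
  simp only [adjWeight, Finset.sum_add_distrib, ← Finset.mul_sum]
  rw [sum_symmDiff_ite_mem]
  exact add_le_add_right (mul_le_mul_of_nonneg_left
    (sum_symmDiff_le M N fun e => dist_nonneg (x := e.1) (y := e.2)) hc) _

end SymmDiff

lemma exists_mem_le_of_sum_le {l : List ℝ} (hl : l ≠ []) {c : ℝ} (hc : 0 ≤ c)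
    (h : l.sum ≤ c) : ∃ x ∈ l, x ≤ c := by
  by_contra! hlt
  obtain ⟨x, t, rfl⟩ := List.exists_cons_of_ne_nil hl
  have ht : 0 ≤ t.sum :=
    List.sum_nonneg fun y hy => hc.trans (hlt y (List.mem_cons_of_mem _ hy)).le
  have hx := hlt x List.mem_cons_self
  rw [List.sum_cons] at h
  linarith

theorem exists_augPath_adjCost_le {d : ℕ} {A B : Finset (Pt d)} {M N : Finset (Pt d × Pt d)}
    (hAB : Disjoint A B) (hM : IsMatching A B M) (hN : IsMatching A B N)
    (hNperf : ∀ v ∈ A ∪ B, ∃ f ∈ N, Incident v f) (hcard : M.card < B.card)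
    {c0 θ c : ℝ} (hθ : 0 ≤ c0 * θ)
    (hcyc : ∀ C : List (Pt d), IsAltCycle A B M C → 0 ≤ adjCost c0 θ M (cycleEdges A C))
    (hc : matchCost N - matchCost M + c0 * θ * (matchCost M + matchCost N) ≤ c) (hc0 : 0 ≤ c) :
    ∃ L, IsAugPath A B M L ∧ adjCost c0 θ M (pathEdges A L) ≤ c := by
  obtain ⟨Ps, Cs, ⟨hPs, hCs, hsum⟩, hPs_ne⟩ :=
    (isAltSubgraph_symmDiff hAB hM hN hNperf).exists_decomposition hAB hM hN
      (adjWeight c0 θ M) (closedIn_symmDiff hAB hM hN)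
  have hcycles : 0 ≤ (Cs.map fun C => ((cycleEdges A C).map (adjWeight c0 θ M)).sum).sum :=
    List.sum_nonneg fun x hx => by
      obtain ⟨C, hC, rfl⟩ := List.mem_map.mp hx
      exact (adjCost_eq_sum_map c0 θ M _).symm ▸ hcyc C (hCs C hC)
  have hweight := sum_adjWeight_symmDiff_le hθ M N
  obtain ⟨x, hx, hx_le⟩ := exists_mem_le_of_sum_le
    (List.map_eq_nil_iff.not.mpr (hPs_ne (exists_free_touches_symmDiff hAB hM hcard hNperf)))
    hc0 (by linarith)
  obtain ⟨L, hL, rfl⟩ := List.mem_map.mp hx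
  exact ⟨L, hPs L hL, (adjCost_eq_sum_map c0 θ M _).trans_le hx_le⟩

lemma sub_add_mul_add_le {ε c0 c1 a b : ℝ} (hε : 0 < ε) (hε1 : ε ≤ 1) (hc0 : 0 < c0)
    (hc1 : 8 * c0 ≤ c1) (ha : 0 ≤ a) (hab : a ≤ (1 + ε / 2) * b) :
    b - a + c0 * (ε / c1) * (a + b) ≤ (1 + ε / 2) * b - a := by
  have hb : 0 ≤ b := by nlinarith
  have hc : c0 * (ε / c1) ≤ ε / 8 := by
    rw [mul_div_assoc', div_le_div_iff₀ (by linarith) (by norm_num)]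
    nlinarith
  have hab' : a + b ≤ 5 / 2 * b := by nlinarith
  nlinarith [mul_le_mul hc hab' (by linarith) (by positivity)]

theorem stmt10_general (d n i : ℕ) (A B : Finset (Pt d)) (hAB : Disjoint A B)
    (hA : A.card = n) (hB : B.card = n)
    (ε c0 c1 εu εl : ℝ) (hε : 0 < ε) (hε1 : ε ≤ 1)
    (hc0 : 0 < c0) (hc1 : 8 * c0 ≤ c1) (hεu : εu = ε / c1)
    (hεl : 0 < εl)
    (M : Finset (Pt d × Pt d)) (hM : IsMatching A B M)
    (hMcard : M.card = i) (hin : i < n)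
    (Mopt : Finset (Pt d × Pt d)) (hMopt : IsMatching A B Mopt) (hMoptcard : Mopt.card = n)
    (hMcost : matchCost M ≤ (1 + ε / 2) * matchCost Mopt)
    (hcyc : ∀ L : List (Pt d), IsAltCycle A B M L → 0 ≤ adjCost c0 εu M (cycleEdges A L))
    (astar : ℝ) (hastar : IsLeast (adjSet c0 εu A B M) astar) :
    ∀ L : List (Pt d), IsAugPath A B M L →
      adjCost c0 εl M (pathEdges A L) ≤ astar →
      netCost M (pathEdges A L) ≤ (1 + ε / 2) * matchCost Mopt - matchCost M ∧
      matchCost (symmDiff M (pathEdges A L).toFinset) ≤ (1 + ε / 2) * matchCost Mopt := by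
  intro L hL hadj
  have hperf : ∀ v ∈ A ∪ B, ∃ f ∈ Mopt, Incident v f := fun v hv =>
    hMopt.exists_incident (by omega) (by omega) hv
  have hc1_pos : 0 < c1 := by linarith
  have hεu_nonneg : 0 ≤ c0 * εu := by rw [hεu]; positivity
  obtain ⟨L₀, hL₀, hL₀_le⟩ := exists_augPath_adjCost_le hAB hM hMopt hperf (by omega)
    hεu_nonneg hcyc (hεu ▸ sub_add_mul_add_le hε hε1 hc0 hc1 (matchCost_nonneg M) hMcost)
    (by linarith)
  have hnet : netCost M (pathEdges A L) ≤ (1 + ε / 2) * matchCost Mopt - matchCost M :=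
    (netCost_le_adjCost (by positivity) M _).trans
      (hadj.trans ((hastar.2 ⟨L₀, hL₀, rfl⟩).trans hL₀_le))
  refine ⟨hnet, ?_⟩
  rw [matchCost_symmDiff (nodup_pathEdges hL.1.2.1)]
  linarith

/-- let `0 < ε ≤ 1`, `ε̄ = ε/c1` with `c1 ≥ 8·c0`, and `0 < ε̲ ≤ ε̄`.
If `M` is a matching of size `i < n` with `cost(M) ≤ (1 + ε/2)·cost(Mopt)` and every
alternating cycle `Γ` satisfies `adj_{ε̄,M}(Γ) ≥ 0`, then every augmenting path `Π` with
`adj_{ε̲,M}(Π) ≤ adj*_{ε̄,M}` satisfies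
`netcost_M(Π) ≤ (1 + ε/2)·cost(Mopt) − cost(M)`; in particular
`cost(M ⊕ Π) ≤ (1 + ε/2)·cost(Mopt)`. -/
theorem stmt10 (d n i : ℕ) (hn : 1 ≤ n) (A B : Finset (Pt d)) (hAB : Disjoint A B)
    (hA : A.card = n) (hB : B.card = n)
    (ε c0 c1 εu εl : ℝ) (hε : 0 < ε) (hε1 : ε ≤ 1)
    (hc0 : 0 < c0) (hc1 : 8 * c0 ≤ c1) (hεu : εu = ε / c1)
    (hεl : 0 < εl) (hεlu : εl ≤ εu)
    (M : Finset (Pt d × Pt d)) (hM : IsMatching A B M)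
    (hMcard : M.card = i) (hin : i < n)
    (Mopt : Finset (Pt d × Pt d)) (hMopt : IsMatching A B Mopt) (hMoptcard : Mopt.card = n)
    (hMoptmin : ∀ M'' : Finset (Pt d × Pt d),
      IsMatching A B M'' → M''.card = n → matchCost Mopt ≤ matchCost M'')
    (hMcost : matchCost M ≤ (1 + ε / 2) * matchCost Mopt)
    (hcyc : ∀ L : List (Pt d), IsAltCycle A B M L → 0 ≤ adjCost c0 εu M (cycleEdges A L))
    (astar : ℝ) (hastar : IsLeast (adjSet c0 εu A B M) astar) :
    ∀ L : List (Pt d), IsAugPath A B M L →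
      adjCost c0 εl M (pathEdges A L) ≤ astar →
      netCost M (pathEdges A L) ≤ (1 + ε / 2) * matchCost Mopt - matchCost M ∧
      matchCost (symmDiff M (pathEdges A L).toFinset) ≤ (1 + ε / 2) * matchCost Mopt :=
  stmt10_general d n i A B hAB hA hB ε c0 c1 εu εl hε hε1 hc0 hc1 hεu hεl M hM hMcard hin Mopt hMopt
    hMoptcard hMcost hcyc astar hastar
end
end

section
/- Let G be a graph on vertex set A ∪ B such that every edge (p,q) of G satisfies ‖p−q‖ ≤ w (Euclidean norm), and suppose every connected component X of G satisfies |X ∩ A| = |X ∩ B|. Then there exists a perfect matching between A and B of cost at most n²·w; in particular cost(M_opt) ≤ n²·w. -/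
/-!
Greedy matching along shortest paths. While `m` pairs remain unmatched, the balance condition
provides an unmatched `a ∈ A` and an unmatched `b ∈ B` in the same component; take such a pair
joined by a shortest walk. Minimality forces every interior vertex of that walk to be an
already matched point, so the walk has length at most `2(n - m) + 1` and the pair costs at most
that many times `w`. Removing a pair from one component preserves balance, and the total cost is
`∑_{m=1}^{n} (2(n - m) + 1) · w = n² · w`.
-/

open scoped Classical

noncomputable section

open Finset

namespace SimpleGraph

variable {V : Type*} {G : SimpleGraph V}

theorem reachable_fromRel_iff {r : V → V → Prop} (hr : ∀ u v, r u v → r v u) {u v : V} :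
    (fromRel r).Reachable u v ↔ Relation.ReflTransGen r u v := by
  rw [reachable_iff_reflTransGen]
  constructor
  · exact Relation.ReflTransGen.mono (fun x y hxy => hxy.2.elim id (hr y x)) u v
  · intro h
    induction h with
    | refl => rfl
    | @tail y z _ hyz ih =>
      by_cases hne : y = z
      · exact hne ▸ ih
      · exact ih.tail ⟨hne, Or.inl hyz⟩

theorem Walk.dist_le_length_mul [PseudoMetricSpace V] {w : ℝ}
    (hlen : ∀ u v, G.Adj u v → Dist.dist u v ≤ w) {u v : V} (p : G.Walk u v) :
    Dist.dist u v ≤ p.length * w := by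
  induction p with
  | nil => simp
  | @cons a b c h p ih =>
    calc Dist.dist a c ≤ Dist.dist a b + Dist.dist b c := dist_triangle _ _ _
      _ ≤ w + p.length * w := add_le_add (hlen _ _ h) ih
      _ = (p.cons h).length * w := by rw [Walk.length_cons]; push_cast; ring

theorem Walk.mem_of_support_subset {S : Set V} (hS : G.support ⊆ S) {u v : V}
    (p : G.Walk u v) (hu : u ∈ S) {x : V} (hx : x ∈ p.support) : x ∈ S := by
  by_cases hxu : x = u
  · exact hxu ▸ hu
  · exact hS (mem_support_of_reachable hxu ⟨(p.takeUntil x hx).reverse⟩)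

theorem exists_walk_length_minimal {A B : Set V} {a b : V} (ha : a ∈ A) (hb : b ∈ B)
    (hab : G.Reachable a b) :
    ∃ a₀ ∈ A, ∃ b₀ ∈ B, ∃ p : G.Walk a₀ b₀,
      ∀ a ∈ A, ∀ b ∈ B, ∀ q : G.Walk a b, p.length ≤ q.length := by
  have hex : ∃ L, ∃ a ∈ A, ∃ b ∈ B, ∃ p : G.Walk a b, p.length = L :=
    ⟨_, a, ha, b, hb, hab.some, rfl⟩
  obtain ⟨a₀, ha₀, b₀, hb₀, p, hp⟩ := Nat.find_spec hex
  exact ⟨a₀, ha₀, b₀, hb₀, p, fun a ha b hb q => hp ▸ Nat.find_min' hex ⟨a, ha, b, hb, q, rfl⟩⟩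

section MinimalWalk

variable {A B : Set V} {a₀ b₀ : V} (ha₀ : a₀ ∈ A) (hb₀ : b₀ ∈ B) {p : G.Walk a₀ b₀}
  (hmin : ∀ a ∈ A, ∀ b ∈ B, ∀ q : G.Walk a b, p.length ≤ q.length)
include ha₀ hb₀ hmin

theorem Walk.isPath_of_minimal : p.IsPath :=
  p.bypass_eq_self_of_length_le_length_bypass (hmin _ ha₀ _ hb₀ _) ▸ p.bypass_isPath

theorem Walk.eq_or_eq_of_minimal {x : V} (hx : x ∈ p.support) (hxAB : x ∈ A ∪ B) :
    x = a₀ ∨ x = b₀ := by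
  by_contra! h
  rcases hxAB with hxA | hxB
  · exact (p.length_dropUntil_lt_length hx h.1).not_ge (hmin x hxA b₀ hb₀ _)
  · exact (p.length_takeUntil_lt_length hx h.2).not_ge (hmin a₀ ha₀ x hxB _)

end MinimalWalk

def IsBalanced (G : SimpleGraph V) (A B : Finset V) : Prop :=
  ∀ v, #{a ∈ A | G.Reachable v a} = #{b ∈ B | G.Reachable v b}

theorem IsBalanced.exists_reachable {A B : Finset V} (h : IsBalanced G A B) {a : V}
    (ha : a ∈ A) : ∃ b ∈ B, G.Reachable a b := by
  have hpos : 0 < #{b ∈ B | G.Reachable a b} := by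
    rw [← h a]
    exact card_pos.2 ⟨a, mem_filter.2 ⟨ha, Reachable.refl a⟩⟩
  obtain ⟨b, hb⟩ := card_pos.1 hpos
  exact ⟨b, mem_filter.1 hb⟩

variable [DecidableEq V]

theorem Walk.IsPath.length_add_card_le {S C : Finset V} {u v : V} {p : G.Walk u v}
    (hp : p.IsPath) (hS : ∀ x ∈ p.support, x ∈ S) (hC : C ⊆ S)
    (hends : ∀ x ∈ p.support, x ∈ C → x = u ∨ x = v) :
    p.length + #C ≤ #S + 1 := by
  have hcard : #p.support.toFinset = p.length + 1 := by
    rw [List.toFinset_card_of_nodup hp.support_nodup, p.length_support]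
  have hsub : p.support.toFinset ⊆ {u, v} ∪ (S \ C) := by
    intro x hx
    rw [List.mem_toFinset] at hx
    by_cases hxC : x ∈ C
    · rcases hends x hx hxC with rfl | rfl <;> simp
    · simp [hS x hx, hxC]
  have h1 := card_le_card hsub
  have h2 := card_union_le {u, v} (S \ C)
  have h3 := card_sdiff_of_subset hC
  have h4 : #({u, v} : Finset V) ≤ 2 := card_le_two
  have h5 := card_le_card hC
  omega

theorem exists_walk_length_add_card_le {S A B : Finset V} (hS : G.support ⊆ S)
    (hAB : A ∪ B ⊆ S) (hdisj : Disjoint A B) {a b : V} (ha : a ∈ A) (hb : b ∈ B)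
    (hab : G.Reachable a b) :
    ∃ a₀ ∈ A, ∃ b₀ ∈ B, ∃ p : G.Walk a₀ b₀, p.length + #A + #B ≤ #S + 1 := by
  obtain ⟨a₀, ha₀, b₀, hb₀, p, hmin⟩ :=
    exists_walk_length_minimal (A := (A : Set V)) (B := (B : Set V)) ha hb hab
  refine ⟨a₀, ha₀, b₀, hb₀, p, ?_⟩
  have hlen := (Walk.isPath_of_minimal ha₀ hb₀ hmin).length_add_card_le
    (fun x hx => p.mem_of_support_subset hS (hAB (mem_union_left B ha₀)) hx) hAB
    (fun x hx hxC => Walk.eq_or_eq_of_minimal ha₀ hb₀ hmin hx (by simpa using hxC))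
  rwa [card_union_of_disjoint hdisj, ← add_assoc] at hlen

theorem isBalanced_of_forall_mem {S A B : Finset V} (hS : G.support ⊆ S) (hAB : A ∪ B ⊆ S)
    (h : ∀ v ∈ S, #{a ∈ A | G.Reachable v a} = #{b ∈ B | G.Reachable v b}) :
    IsBalanced G A B := by
  intro v
  by_cases hv : v ∈ S
  · exact h v hv
  have hunreach : ∀ x ∈ S, ¬G.Reachable v x := fun x hx hvx =>
    hv (if hxv : v = x then hxv ▸ hx else hS (mem_support_of_reachable hxv hvx))
  rw [filter_false_of_mem fun x hx => hunreach x (hAB (mem_union_left B hx)),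
    filter_false_of_mem fun x hx => hunreach x (hAB (mem_union_right A hx))]

theorem IsBalanced.erase {A B : Finset V} (h : IsBalanced G A B) {a b : V} (ha : a ∈ A)
    (hb : b ∈ B) (hab : G.Reachable a b) : IsBalanced G (A.erase a) (B.erase b) := by
  intro v
  have hiff : G.Reachable v a ↔ G.Reachable v b :=
    ⟨fun h => h.trans hab, fun h => h.trans hab.symm⟩
  rw [filter_erase, filter_erase, card_erase_eq_ite, card_erase_eq_ite, h v]
  simp [ha, hb, hiff]

end SimpleGraph

open SimpleGraph

variable {d : ℕ}

theorem IsMatching.insert_of_erase {A B : Finset (Pt d)} {M : Finset (Pt d × Pt d)} {a b : Pt d}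
    (hM : IsMatching (A.erase a) (B.erase b) M) (ha : a ∈ A) (hb : b ∈ B) :
    IsMatching A B (insert (a, b) M) := by
  obtain ⟨hmem, hinj₁, hinj₂⟩ := hM
  have hfst : ∀ e ∈ M, e.1 ≠ a := fun e he => ne_of_mem_erase (hmem e he).1
  have hsnd : ∀ e ∈ M, e.2 ≠ b := fun e he => ne_of_mem_erase (hmem e he).2
  refine ⟨?_, ?_, ?_⟩
  · intro e he
    rcases mem_insert.1 he with rfl | he
    · exact ⟨ha, hb⟩
    · exact ⟨mem_of_mem_erase (hmem e he).1, mem_of_mem_erase (hmem e he).2⟩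
  · intro e he e' he' h
    rcases mem_insert.1 he with rfl | he <;> rcases mem_insert.1 he' with rfl | he'
    · rfl
    · exact absurd h.symm (hfst e' he')
    · exact absurd h (hfst e he)
    · exact hinj₁ e he e' he' h
  · intro e he e' he' h
    rcases mem_insert.1 he with rfl | he <;> rcases mem_insert.1 he' with rfl | he'
    · rfl
    · exact absurd h.symm (hsnd e' he')
    · exact absurd h (hsnd e he)
    · exact hinj₂ e he e' he' h

theorem matchCost_insert {M : Finset (Pt d × Pt d)} {e : Pt d × Pt d} (he : e ∉ M) :
    matchCost (insert e M) = dist e.1 e.2 + matchCost M :=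
  sum_insert he

theorem exists_matching_matchCost_le (G : SimpleGraph (Pt d)) (S : Finset (Pt d))
    (hS : G.support ⊆ S) {w : ℝ} (hlen : ∀ u v, G.Adj u v → dist u v ≤ w) (m : ℕ) :
    ∀ A B : Finset (Pt d), #A = m → #B = m → A ∪ B ⊆ S → Disjoint A B → IsBalanced G A B →
      ∃ M, IsMatching A B M ∧ #M = m ∧ matchCost M ≤ m * (#S - m) * w := by
  induction m with
  | zero =>
    intro A B hA hB _ _ _
    refine ⟨∅, ⟨?_, ?_, ?_⟩, rfl, ?_⟩ <;> simp [matchCost]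
  | succ m ih =>
    intro A B hA hB hsub hdisj hbal
    obtain ⟨a, ha⟩ : A.Nonempty := card_pos.1 (by omega)
    obtain ⟨b, hb, hab⟩ := hbal.exists_reachable ha
    obtain ⟨a₀, ha₀, b₀, hb₀, p, hp⟩ := exists_walk_length_add_card_le hS hsub hdisj ha hb hab
    have hne : a₀ ≠ b₀ := fun h => disjoint_left.1 hdisj ha₀ (h ▸ hb₀)
    have hw : 0 ≤ w := dist_nonneg.trans (hlen _ _ (p.adj_snd (Walk.not_nil_of_ne hne)))
    have hcost : dist a₀ b₀ ≤ (#S - 2 * m - 1) * w := by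
      have hp' : (p.length : ℝ) + #A + #B ≤ #S + 1 := by exact_mod_cast hp
      rw [hA, hB] at hp'
      push_cast at hp'
      exact (p.dist_le_length_mul hlen).trans (mul_le_mul_of_nonneg_right (by linarith) hw)
    obtain ⟨M, hM, hMcard, hMcost⟩ := ih (A.erase a₀) (B.erase b₀)
      (by rw [card_erase_of_mem ha₀, hA]; rfl) (by rw [card_erase_of_mem hb₀, hB]; rfl)
      ((union_subset_union (erase_subset _ _) (erase_subset _ _)).trans hsub)
      (hdisj.mono (erase_subset _ _) (erase_subset _ _)) (hbal.erase ha₀ hb₀ ⟨p⟩)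
    have hnot : (a₀, b₀) ∉ M := fun h => by simpa using (hM.1 _ h).1
    refine ⟨insert (a₀, b₀) M, hM.insert_of_erase ha₀ hb₀,
      by rw [card_insert_of_notMem hnot, hMcard], ?_⟩
    calc matchCost (insert (a₀, b₀) M) = dist a₀ b₀ + matchCost M := matchCost_insert hnot
      _ ≤ (#S - 2 * m - 1) * w + m * (#S - m) * w := add_le_add hcost hMcost
      _ = ((m + 1 : ℕ) : ℝ) * (#S - (m + 1 : ℕ)) * w := by push_cast; ring

theorem stmt15_general (d n : ℕ) (A B : Finset (Pt d)) (hAB : Disjoint A B)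
    (hA : A.card = n) (hB : B.card = n)
    (w : ℝ) (Adj : Pt d → Pt d → Prop)
    (hsym : ∀ u v, Adj u v → Adj v u)
    (hvert : ∀ u v, Adj u v → u ∈ A ∪ B ∧ v ∈ A ∪ B)
    (hlen : ∀ u v, Adj u v → dist u v ≤ w)
    (hbal : ∀ v ∈ A ∪ B,
      (A.filter fun a => Relation.ReflTransGen Adj v a).card =
      (B.filter fun b => Relation.ReflTransGen Adj v b).card)
    (Mopt : Finset (Pt d × Pt d))
    (hMoptmin : ∀ M'' : Finset (Pt d × Pt d),
      IsMatching A B M'' → M''.card = n → matchCost Mopt ≤ matchCost M'') :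
    (∃ M : Finset (Pt d × Pt d),
      IsMatching A B M ∧ M.card = n ∧ matchCost M ≤ (n : ℝ) ^ 2 * w) ∧
    matchCost Mopt ≤ (n : ℝ) ^ 2 * w := by
  set G := fromRel Adj
  have hS : G.support ⊆ ↑(A ∪ B) := by
    rintro u ⟨v, -, huv | hvu⟩
    exacts [(hvert u v huv).1, (hvert v u hvu).2]
  have hG : ∀ u v, G.Adj u v → dist u v ≤ w := by
    rintro u v ⟨-, huv | hvu⟩
    exacts [hlen u v huv, dist_comm u v ▸ hlen v u hvu]
  have hGbal : IsBalanced G A B := isBalanced_of_forall_mem hS Subset.rfl fun v hv => by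
    simpa only [G, reachable_fromRel_iff hsym] using hbal v hv
  obtain ⟨M, hM, hMcard, hMcost⟩ :=
    exists_matching_matchCost_le G _ hS hG n A B hA hB Subset.rfl hAB hGbal
  have hbound : (n : ℝ) * (#(A ∪ B) - n) * w = n ^ 2 * w := by
    rw [card_union_of_disjoint hAB, hA, hB]; push_cast; ring
  rw [hbound] at hMcost
  exact ⟨⟨M, hM, hMcard, hMcost⟩, (hMoptmin M hM hMcard).trans hMcost⟩

/-- let `G` (given by its adjacency relation `Adj`) be a graph on vertex set
`A ∪ B` all of whose edges have Euclidean length at most `w`, and suppose every connected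
component `X` of `G` satisfies `|X ∩ A| = |X ∩ B|`.  Then there exists a perfect matching
between `A` and `B` of cost at most `n²·w`; in particular `cost(Mopt) ≤ n²·w`. -/
theorem stmt15 (d n : ℕ) (hn : 1 ≤ n) (A B : Finset (Pt d)) (hAB : Disjoint A B)
    (hA : A.card = n) (hB : B.card = n)
    (w : ℝ) (Adj : Pt d → Pt d → Prop)
    (hsym : ∀ u v, Adj u v → Adj v u)
    (hvert : ∀ u v, Adj u v → u ∈ A ∪ B ∧ v ∈ A ∪ B)
    (hlen : ∀ u v, Adj u v → dist u v ≤ w)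
    (hbal : ∀ v ∈ A ∪ B,
      (A.filter fun a => Relation.ReflTransGen Adj v a).card =
      (B.filter fun b => Relation.ReflTransGen Adj v b).card)
    (Mopt : Finset (Pt d × Pt d)) (hMopt : IsMatching A B Mopt) (hMoptcard : Mopt.card = n)
    (hMoptmin : ∀ M'' : Finset (Pt d × Pt d),
      IsMatching A B M'' → M''.card = n → matchCost Mopt ≤ matchCost M'') :
    (∃ M : Finset (Pt d × Pt d),
      IsMatching A B M ∧ M.card = n ∧ matchCost M ≤ (n : ℝ) ^ 2 * w) ∧
    matchCost Mopt ≤ (n : ℝ) ^ 2 * w :=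
  stmt15_general d n A B hAB hA hB w Adj hsym hvert hlen hbal Mopt hMoptmin
end
end
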